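/- Let H be a nontrivial abelian group, I a countably infinite set, and J a set of cardinality ℵ₁. Then there exists a coherent family ⟨φ_f : X(f) → H | f : I → [J]^{<ω}⟩ that is not trivial. -/

import Mathlib

/-!
For every countable ordinal `δ` there is a finite-to-one map `e δ : δ → ℕ`, and these maps cohere:
for `β ≤ δ`, `e β` and `e δ` disagree at only finitely many points below `β`. They are built by
transfinite recursion; at a limit `δ` one fixes a cofinal sequence `s k` and sets
`e δ γ = max k (e (s k) γ)` for the least `k` with `γ < s k`.

Identify `I` with `ℕ` and `J` with `ω₁`. Bound `X(f)` by a countable ordinal `δ f` and let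
`φ f (i, j)` be `a` if `e (δ f) j ≤ i` and `b` otherwise; `φ` is coherent because `e` is. If `ψ`
trivialised `φ`, testing against `f = fun _ => {j}` shows that each column `ψ (·, j)` equals `a`
from some `N j` on. Uncountably many `j` share one value `N j = n₀`; for infinitely many of them
below some countable `δ`, the choice `f i = {j | e δ j = i + 1}` makes `φ f` equal to `b` at
infinitely many points where `ψ` is `a`.
-/

open Cardinal Ordinal Order

theorem Ordinal.countable_Iio_of_lt_omega_one {δ : Ordinal} (hδ : δ < ω₁) :
    (Set.Iio δ).Countable := by
  rw [← le_aleph0_iff_set_countable, Cardinal.mk_Iio_ordinal, lift_le_aleph0, ← lt_aleph_one_iff]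
  exact lt_omega_iff_card_lt.1 hδ

theorem Ordinal.exists_nat_seq_cofinal {δ : Ordinal} (hl : IsSuccLimit δ) (hδ : δ < ω₁) :
    ∃ s : ℕ → Ordinal, (∀ k, s k < δ) ∧ ∀ γ < δ, ∃ k, γ < s k := by
  obtain ⟨g, hg⟩ := (countable_Iio_of_lt_omega_one hδ).exists_surjective ⟨0, hl.bot_lt⟩
  refine ⟨fun k => g k + 1, fun k => hl.add_one_lt (g k).2, fun γ hγ => ?_⟩
  obtain ⟨k, hk⟩ := hg ⟨γ, hγ⟩
  exact ⟨k, by simp [hk]⟩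

open Classical in
noncomputable def cofinalSeq (δ : Ordinal) : ℕ → Ordinal :=
  if h : IsSuccLimit δ ∧ δ < ω₁ then (exists_nat_seq_cofinal h.1 h.2).choose else fun _ => 0

theorem cofinalSeq_lt {δ : Ordinal} (hl : IsSuccLimit δ) (k : ℕ) : cofinalSeq δ k < δ := by
  unfold cofinalSeq
  split_ifs with h
  · exact (exists_nat_seq_cofinal h.1 h.2).choose_spec.1 k
  · exact hl.bot_lt

theorem exists_lt_cofinalSeq {δ γ : Ordinal} (hl : IsSuccLimit δ) (hδ : δ < ω₁) (hγ : γ < δ) :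
    ∃ k, γ < cofinalSeq δ k := by
  rw [cofinalSeq, dif_pos ⟨hl, hδ⟩]
  exact (exists_nat_seq_cofinal hl hδ).choose_spec.2 γ hγ

open Classical in
/-- The map `e δ` of the construction; only its values below `δ` are meaningful. -/
noncomputable def coherentSeq (δ : Ordinal.{u}) : Ordinal.{u} → ℕ :=
  limitRecOn δ (fun _ => 0) (fun β e γ => if γ < β then e γ else 0)
    fun δ hl e γ => if h : ∃ k, γ < cofinalSeq δ k then
      max (Nat.find h) (e _ (cofinalSeq_lt hl (Nat.find h)) γ) else 0

theorem coherentSeq_add_one (β γ : Ordinal) :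
    coherentSeq (β + 1) γ = if γ < β then coherentSeq β γ else 0 := by
  simp only [coherentSeq, limitRecOn_add_one]

open Classical in
theorem coherentSeq_of_isSuccLimit {δ γ : Ordinal} (hl : IsSuccLimit δ)
    (h : ∃ k, γ < cofinalSeq δ k) :
    coherentSeq δ γ = max (Nat.find h) (coherentSeq (cofinalSeq δ (Nat.find h)) γ) := by
  rw [coherentSeq, limitRecOn_limit _ _ _ _ hl, dif_pos h]
  rfl

theorem finite_coherentSeq_le {δ : Ordinal} (hδ : δ < ω₁) (n : ℕ) :
    {γ | γ < δ ∧ coherentSeq δ γ ≤ n}.Finite := by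
  induction δ using limitRecOn with
  | zero => simp
  | add_one β ih =>
    refine ((ih ((lt_add_one β).trans hδ)).insert β).subset ?_
    rintro γ ⟨hγ, hle⟩
    rcases (lt_add_one_iff.1 hγ).lt_or_eq with hγβ | rfl
    · rw [coherentSeq_add_one, if_pos hγβ] at hle
      exact Or.inr ⟨hγβ, hle⟩
    · exact Or.inl rfl
  | limit δ hl ih =>
    refine ((Set.finite_Iic n).biUnion fun k _ =>
      ih _ (cofinalSeq_lt hl k) ((cofinalSeq_lt hl k).trans hδ)).subset ?_
    rintro γ ⟨hγ, hle⟩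
    have h := exists_lt_cofinalSeq hl hδ hγ
    rw [coherentSeq_of_isSuccLimit hl h, max_le_iff] at hle
    exact Set.mem_biUnion hle.1 ⟨Nat.find_spec h, hle.2⟩

theorem finite_coherentSeq_ne {β δ : Ordinal} (hδ : δ < ω₁) (hβ : β ≤ δ) :
    {γ | γ < β ∧ coherentSeq β γ ≠ coherentSeq δ γ}.Finite := by
  induction δ using limitRecOn generalizing β with
  | zero => simp [nonpos_iff_eq_zero.1 hβ]
  | add_one α ih =>
    rcases hβ.lt_or_eq with hβ | rfl
    · have hβα := lt_add_one_iff.1 hβ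
      refine (ih ((lt_add_one α).trans hδ) hβα).subset fun γ ⟨hγ, hne⟩ => ⟨hγ, ?_⟩
      rwa [coherentSeq_add_one, if_pos (hγ.trans_le hβα)] at hne
    · simp
  | limit δ hl ih =>
    rcases hβ.lt_or_eq with hβ | rfl
    swap
    · simp
    set s := cofinalSeq δ
    have hs k : s k < ω₁ := (cofinalSeq_lt hl k).trans hδ
    have hcoh k : {γ | γ < β ∧ γ < s k ∧ coherentSeq β γ ≠ coherentSeq (s k) γ}.Finite := by
      rcases le_total β (s k) with h | h
      · exact (ih _ (cofinalSeq_lt hl k) (hs k) h).subset fun γ hγ => ⟨hγ.1, hγ.2.2⟩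
      · exact (ih _ hβ (hβ.trans hδ) h).subset fun γ hγ => ⟨hγ.2.1, hγ.2.2.symm⟩
    obtain ⟨m, hm⟩ := exists_lt_cofinalSeq hl hδ hβ
    refine ((Set.finite_Iic m).biUnion fun k _ =>
      (finite_coherentSeq_le (hs k) k).union (hcoh k)).subset ?_
    rintro γ ⟨hγ, hne⟩
    have h := exists_lt_cofinalSeq hl hδ (hγ.trans hβ)
    rw [coherentSeq_of_isSuccLimit hl h] at hne
    refine Set.mem_biUnion (Nat.find_min' h (hγ.trans hm)) ?_
    -- With `k = Nat.find h`, `coherentSeq δ γ = coherentSeq (s k) γ` unless the latter is `< k`.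
    rcases le_total (coherentSeq (s (Nat.find h)) γ) (Nat.find h) with hle | hle
    · exact Or.inl ⟨Nat.find_spec h, hle⟩
    · rw [max_eq_right hle] at hne
      exact Or.inr ⟨hγ, Nat.find_spec h, hne⟩

section Family

variable {I J H : Type*}

/-- `φ f` stands for `φ_f : X(f) → H`; its values off `X(f)` are ignored. -/
def IsCoherentFamily (φ : (I → Finset J) → I × J → H) : Prop :=
  ∀ f g : I → Finset J, (∀ i, f i ⊆ g i) → {x : I × J | x.2 ∈ f x.1 ∧ φ f x ≠ φ g x}.Finite

def IsTrivialization (φ : (I → Finset J) → I × J → H) (ψ : I × J → H) : Prop :=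
  ∀ f : I → Finset J, {x : I × J | x.2 ∈ f x.1 ∧ φ f x ≠ ψ x}.Finite

noncomputable def supBound (o : J → Ordinal.{u}) (f : I → Finset J) : Ordinal.{u} :=
  ⨆ i, (f i).sup fun j => o j + 1

variable {o : J → Ordinal.{u}}

theorem supBound_lt_omega_one [Countable I] (hω : ∀ j, o j < ω₁) (f : I → Finset J) :
    supBound o f < ω₁ :=
  iSup_lt_omega_one fun _ => (Finset.sup_lt_iff (omega_pos 1)).2 fun j _ =>
    (isSuccLimit_omega 1).add_one_lt (hω j)

theorem lt_supBound [Countable I] {f : I → Finset J} {i : I} {j : J} (hj : j ∈ f i) :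
    o j < supBound o f :=
  (lt_add_one (o j)).trans_le <|
    (Finset.le_sup (f := fun j => o j + 1) hj).trans (Ordinal.le_iSup.{u} _ i)

theorem supBound_mono [Countable I] {f g : I → Finset J} (hfg : ∀ i, f i ⊆ g i) :
    supBound o f ≤ supBound o g :=
  Ordinal.iSup_le fun i => (Finset.sup_mono (hfg i)).trans (Ordinal.le_iSup.{u} _ i)

noncomputable def coherentFamily (a b : H) (e : I ≃ ℕ) (o : J → Ordinal) (f : I → Finset J)
    (x : I × J) : H :=
  if coherentSeq (supBound o f) (o x.2) ≤ e x.1 then a else b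

theorem isCoherentFamily_coherentFamily (a b : H) (e : I ≃ ℕ) (ho : Function.Injective o)
    (hω : ∀ j, o j < ω₁) : IsCoherentFamily (coherentFamily a b e o) := by
  have := e.injective.countable
  intro f g hfg
  have hD := finite_coherentSeq_ne (supBound_lt_omega_one hω g) (supBound_mono (o := o) hfg)
  refine Set.Finite.of_finite_fibers Prod.snd ((hD.preimage ho.injOn).subset ?_) fun j _ => ?_
  · rintro _ ⟨⟨i, j⟩, ⟨hj, hne⟩, rfl⟩
    refine ⟨lt_supBound hj, fun heq => hne ?_⟩
    simp only [coherentFamily, heq]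
  · let M := max (coherentSeq (supBound o f) (o j)) (coherentSeq (supBound o g) (o j))
    refine (((Set.finite_Iio M).preimage e.injective.injOn).prod
      (Set.finite_singleton j)).subset ?_
    rintro ⟨i, j'⟩ ⟨⟨-, hne⟩, rfl : j' = j⟩
    refine ⟨show e i < M from lt_of_not_ge fun hM => hne ?_, rfl⟩
    rw [max_le_iff] at hM
    simp only [coherentFamily, if_pos hM.1, if_pos hM.2]

theorem exists_forall_eq_of_isTrivialization {a b : H} {e : I ≃ ℕ} {ψ : I × J → H}
    (hψ : IsTrivialization (coherentFamily a b e o) ψ) (j : J) :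
    ∃ N : ℕ, ∀ i, N ≤ e i → ψ (i, j) = a := by
  obtain ⟨B, hB⟩ := ((hψ fun _ => {j}).image fun x => e x.1).bddAbove
  refine ⟨max (coherentSeq (supBound o fun _ : I => {j}) (o j)) (B + 1), fun i hi => ?_⟩
  rw [max_le_iff] at hi
  by_contra hne
  have : e i ≤ B := hB ⟨(i, j), ⟨Finset.mem_singleton_self j, ?_⟩, rfl⟩
  · omega
  · rw [coherentFamily, if_pos hi.1]
    exact Ne.symm hne

end Family

theorem exists_infinite_fiber_of_uncountable {J : Type*} [Uncountable J] (N : J → ℕ) :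
    ∃ n, (N ⁻¹' {n}).Infinite := by
  by_contra! h
  exact Set.not_countable_univ <| (Set.countable_iUnion fun n => (h n).countable).mono
    fun j _ => Set.mem_iUnion.2 ⟨N j, rfl⟩

theorem Set.Infinite.exists_infinite_subset_forall_lt_of_lt_omega_one {J : Type*} {S : Set J}
    (hS : S.Infinite) {o : J → Ordinal} (hω : ∀ j, o j < ω₁) :
    ∃ A ⊆ S, A.Infinite ∧ ∃ δ < ω₁, ∀ j ∈ A, o j < δ := by
  let g := hS.natEmbedding
  refine ⟨Set.range fun k => (g k : J), Set.range_subset_iff.2 fun k => (g k).2,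
    Set.infinite_range_of_injective (Subtype.val_injective.comp g.injective),
    ⨆ k, o (g k) + 1, iSup_lt_omega_one fun k => (isSuccLimit_omega 1).add_one_lt (hω _), ?_⟩
  rintro _ ⟨k, rfl⟩
  exact (lt_add_one _).trans_le (Ordinal.le_iSup (fun k => o (g k) + 1) k)

theorem not_exists_isTrivialization_coherentFamily {I J H : Type*} [Uncountable J] {a b : H}
    (hab : a ≠ b) (e : I ≃ ℕ) {o : J → Ordinal} (ho : Function.Injective o)
    (hω : ∀ j, o j < ω₁) : ¬ ∃ ψ, IsTrivialization (coherentFamily a b e o) ψ := by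
  have := e.injective.countable
  rintro ⟨ψ, hψ⟩
  choose N hN using exists_forall_eq_of_isTrivialization hψ
  obtain ⟨n₀, hn₀⟩ := exists_infinite_fiber_of_uncountable N
  obtain ⟨A, hAN, hA, δ, hδ, hAδ⟩ := hn₀.exists_infinite_subset_forall_lt_of_lt_omega_one hω
  have hlevel i : {j | j ∈ A ∧ coherentSeq δ (o j) = e i + 1}.Finite :=
    ((finite_coherentSeq_le hδ (e i + 1)).preimage ho.injOn).subset fun j ⟨hj, h⟩ =>
      ⟨hAδ j hj, h.le⟩
  let f i := (hlevel i).toFinset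
  have hf : supBound o f ≤ δ := Ordinal.iSup_le fun i => Finset.sup_le fun j hj =>
    Order.add_one_le_of_lt (hAδ j ((hlevel i).mem_toFinset.1 hj).1)
  have hD := finite_coherentSeq_ne hδ hf
  -- Each `j ∈ A` outside a finite set gives a disagreement of `φ f` with `ψ` at `(i, j)`,
  -- where `e i + 1 = coherentSeq δ (o j)`.
  have hT := hA.sdiff ((hD.union (finite_coherentSeq_le hδ (n₀ + 1))).preimage ho.injOn)
  refine (hT.image (f := fun j => (e.symm (coherentSeq δ (o j) - 1), j))
    fun _ _ _ _ h => congrArg Prod.snd h).mono ?_ (hψ f)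
  rintro _ ⟨j, ⟨hjA, hjT⟩, rfl⟩
  dsimp only
  simp only [Set.mem_preimage, Set.mem_union, Set.mem_ofPred_eq, not_or] at hjT
  obtain ⟨hjD, hjn⟩ := hjT
  have hlarge : n₀ + 1 < coherentSeq δ (o j) := lt_of_not_ge fun h => hjn ⟨hAδ j hjA, h⟩
  set i := e.symm (coherentSeq δ (o j) - 1)
  have hi : e i + 1 = coherentSeq δ (o j) := by simp only [i, Equiv.apply_symm_apply]; omega
  have hjf : j ∈ f i := (hlevel i).mem_toFinset.2 ⟨hjA, hi.symm⟩
  have hcoh : coherentSeq (supBound o f) (o j) = coherentSeq δ (o j) :=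
    not_not.1 fun h => hjD ⟨lt_supBound hjf, h⟩
  have hψa : ψ (i, j) = a := hN j i (by rw [(hAN hjA : N j = n₀)]; omega)
  refine ⟨hjf, ?_⟩
  rw [coherentFamily, if_neg (show ¬coherentSeq (supBound o f) (o j) ≤ e i by omega), hψa]
  exact hab.symm

theorem stmt_5_general (H : Type*) [Nontrivial H]
    (I : Type*) [Countable I] [Infinite I]
    (J : Type*) (hJ : Cardinal.mk J = Cardinal.aleph 1) :
    ∃ φ : (I → Finset J) → I × J → H,
      (∀ f g : I → Finset J, (∀ i, f i ⊆ g i) →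
        {x : I × J | x.2 ∈ f x.1 ∧ φ f x ≠ φ g x}.Finite) ∧
      ¬ ∃ ψ : I × J → H, ∀ f : I → Finset J,
          {x : I × J | x.2 ∈ f x.1 ∧ φ f x ≠ ψ x}.Finite := by
  obtain ⟨a, b, hab⟩ := exists_pair_ne H
  obtain ⟨e⟩ : Nonempty (I ≃ ℕ) := nonempty_equiv_of_countable
  obtain ⟨o⟩ : Nonempty (J ≃ Set.Iio (ω₁ : Ordinal.{0})) := by
    rw [← lift_mk_eq', hJ, Cardinal.mk_Iio_ordinal]
    simp
  have ho : Function.Injective fun j => (o j : Ordinal) := Subtype.val_injective.comp o.injective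
  have : Uncountable J := by rw [← aleph0_lt_mk_iff, hJ]; exact aleph0_lt_aleph_one
  exact ⟨_, isCoherentFamily_coherentFamily a b e ho fun j => (o j).2,
    not_exists_isTrivialization_coherentFamily hab e ho fun j => (o j).2⟩

/-- Let `H` be a nontrivial abelian group, `I` a countably infinite set, and
`J` a set of cardinality `ℵ₁`.  Then there exists a coherent family
`⟨φ_f : X(f) → H | f : I → [J]^{<ω}⟩` (represented by total functions `I × J → H`, with all
conditions imposed only on `X(f) = {(i,j) | j ∈ f i}`) which is not trivial. -/
theorem stmt_5 (H : Type*) [AddCommGroup H] [Nontrivial H]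
    (I : Type*) [Countable I] [Infinite I]
    (J : Type*) (hJ : Cardinal.mk J = Cardinal.aleph 1) :
    ∃ φ : (I → Finset J) → I × J → H,
      (∀ f g : I → Finset J, (∀ i, f i ⊆ g i) →
        {x : I × J | x.2 ∈ f x.1 ∧ φ f x ≠ φ g x}.Finite) ∧
      ¬ ∃ ψ : I × J → H, ∀ f : I → Finset J,
          {x : I × J | x.2 ∈ f x.1 ∧ φ f x ≠ ψ x}.Finite :=
  stmt_5_general H I J hJ
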